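/- arXiv:quant-ph/0702015 — 5 statements merged into one kernel-verified Lean document; each statement's English description precedes it below -/
import Mathlib

section
/- Let α : Fin 2 → Fin 2 → ℂ satisfy α 0 0 * α 1 1 ≠ α 0 1 * α 1 0. Define the braiding matrix R : Matrix (Fin 2 × Fin 2) (Fin 2 × Fin 2) ℂ by R (k,l) (r,s) = α k l if r = l and s = k, and 0 otherwise, and let ψ : Fin 2 → ℂ be the all-ones vector (the state |1⟩ + |2⟩). Then the vector w := R.mulVec (fun (r,s) => ψ r * ψ s) (which satisfies w (k,l) = α k l) is entangled: there do not exist a, b : Fin 2 → ℂ with w (k,l) = a k * b l for all k, l. -/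
/-- If `α 0 0 * α 1 1 ≠ α 0 1 * α 1 0`, then the braiding operator `R` associated with `α`,
applied to the product state `(|1⟩+|2⟩) ⊗ (|1⟩+|2⟩)`, yields an entangled two-qubit state. -/
theorem braiding_entangles_two_qubit (α : Fin 2 → Fin 2 → ℂ)
    (h : α 0 0 * α 1 1 ≠ α 0 1 * α 1 0)
    (R : Matrix (Fin 2 × Fin 2) (Fin 2 × Fin 2) ℂ)
    (hR : ∀ k l r s, R (k, l) (r, s) = if r = l ∧ s = k then α k l else 0)
    (ψ : Fin 2 → ℂ) (hψ : ∀ i, ψ i = 1)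
    (w : Fin 2 × Fin 2 → ℂ)
    (hw : w = R.mulVec (fun p => ψ p.1 * ψ p.2)) :
    ¬ ∃ a b : Fin 2 → ℂ, ∀ k l, w (k, l) = a k * b l := by
  have hwv : ∀ k l, w (k, l) = α k l := by
    intro k l
    subst hw
    simp only [Matrix.mulVec, dotProduct, Fintype.sum_prod_type]
    rw [Fin.sum_univ_two]
    simp [Fin.sum_univ_two, hR, hψ]
    fin_cases k <;> fin_cases l <;> simp
  rintro ⟨a, b, hab⟩
  apply h
  rw [← hwv 0 0, ← hwv 1 1, ← hwv 0 1, ← hwv 1 0, hab, hab, hab, hab]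
  ring
end

section
/- Let α : Fin 2 → Fin 2 → Fin 2 → ℂ be the coefficient vector of a three-qubit pure state, and suppose that every 2×2 minor with distinct columns of each of the three flattening matrices X¹, X², X³ is nonzero; explicitly: α 0 j k * α 1 j' k' ≠ α 0 j' k' * α 1 j k whenever (j,k) ≠ (j',k'); α i 0 k * α i' 1 k' ≠ α i' 0 k' * α i 1 k whenever (i,k) ≠ (i',k'); and α i j 0 * α i' j' 1 ≠ α i' j' 0 * α i j 1 whenever (i,j) ≠ (i',j'). (These are exactly the twelve quantities T₁,…,T₁₂ being nonzero.) Then the state is entangled: there do not exist a, b, c : Fin 2 → ℂ with α i j k = a i * b j * c k for all i, j, k. -/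
/-- If every `2 × 2` minor with distinct columns of each of the three flattening matrices
of a three-qubit state `α` is nonzero (i.e. the twelve Segre generators `T₁,…,T₁₂` are all
nonzero), then the state is entangled (not completely separable). -/
theorem three_qubit_entangled_of_minors_nonzero (α : Fin 2 → Fin 2 → Fin 2 → ℂ)
    (h1 : ∀ j k j' k', (j, k) ≠ (j', k') →
      α 0 j k * α 1 j' k' ≠ α 0 j' k' * α 1 j k)
    (h2 : ∀ i k i' k', (i, k) ≠ (i', k') →
      α i 0 k * α i' 1 k' ≠ α i' 0 k' * α i 1 k)
    (h3 : ∀ i j i' j', (i, j) ≠ (i', j') →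
      α i j 0 * α i' j' 1 ≠ α i' j' 0 * α i j 1) :
    ¬ ∃ a b c : Fin 2 → ℂ, ∀ i j k, α i j k = a i * b j * c k := by
  rintro ⟨a, b, c, h⟩
  exact h1 0 0 0 1 (by decide) (by simp only [h]; ring)
end

section
/- Let α : Fin 2 → Fin 2 → Fin 2 → ℂ be the coefficient vector of a three-qubit pure state. The state is completely separable, i.e. there exist a, b, c : Fin 2 → ℂ with α i j k = a i * b j * c k for all i, j, k, if and only if all 2×2 minors of all three flattening matrices vanish: α 0 j k * α 1 j' k' = α 0 j' k' * α 1 j k, α i 0 k * α i' 1 k' = α i' 0 k' * α i 1 k, and α i j 0 * α i' j' 1 = α i' j' 0 * α i j 1, for all choices of indices. (Equivalently, the state lies on the Segre variety, i.e. T₁ = T₂ = ⋯ = T₁₂ = 0.) -/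
/-- A three-qubit state `α` is completely separable if and only if all `2 × 2` minors of all
three flattening matrices vanish (i.e. the state lies on the Segre variety). -/
theorem three_qubit_separable_iff_segre (α : Fin 2 → Fin 2 → Fin 2 → ℂ) :
    (∃ a b c : Fin 2 → ℂ, ∀ i j k, α i j k = a i * b j * c k) ↔
      ((∀ j k j' k', α 0 j k * α 1 j' k' = α 0 j' k' * α 1 j k) ∧
       (∀ i k i' k', α i 0 k * α i' 1 k' = α i' 0 k' * α i 1 k) ∧
       (∀ i j i' j', α i j 0 * α i' j' 1 = α i' j' 0 * α i j 1)) := by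
  constructor
  · rintro ⟨a, b, c, h⟩
    refine ⟨fun j k j' k' => ?_, fun i k i' k' => ?_, fun i j i' j' => ?_⟩ <;>
      simp only [h] <;> ring
  · rintro ⟨h1, h2, h3⟩
    have s1 : ∀ i j k i' j' k', α i j k * α i' j' k' = α i j' k' * α i' j k := by
      intro i j k i' j' k'
      fin_cases i <;> fin_cases i' <;> simp only [Fin.mk_zero, Fin.mk_one] <;>
        first
          | ring1
          | linear_combination h1 j k j' k'
          | linear_combination h1 j' k' j k
    have s2 : ∀ i j k i' j' k', α i j k * α i' j' k' = α i' j k' * α i j' k := by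
      intro i j k i' j' k'
      fin_cases j <;> fin_cases j' <;> simp only [Fin.mk_zero, Fin.mk_one] <;>
        first
          | ring1
          | linear_combination h2 i k i' k'
          | linear_combination h2 i' k' i k
    by_cases hz : ∀ i j k, α i j k = 0
    · exact ⟨fun _ => 0, fun _ => 0, fun _ => 0, fun i j k => by simp [hz]⟩
    · push_neg at hz
      obtain ⟨i₀, j₀, k₀, ht⟩ := hz
      refine ⟨fun i => α i j₀ k₀, fun j => α i₀ j k₀,
        fun k => α i₀ j₀ k / (α i₀ j₀ k₀ * α i₀ j₀ k₀), fun i j k => ?_⟩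
      have e1 := s1 i j k i₀ j₀ k₀
      have e2 := s2 i₀ j k i₀ j₀ k₀
      field_simp
      linear_combination α i₀ j₀ k₀ * e1 + α i j₀ k₀ * e2
end

section
/- Let m ≥ 1 and let α : (Fin m → Fin 2) → ℂ be the coefficient vector of an m-qubit pure state. The state is completely separable, i.e. there exists a family a : Fin m → (Fin 2 → ℂ) with α f = ∏_{j : Fin m} a j (f j) for all f : Fin m → Fin 2, if and only if all 2×2 minors of every flattening matrix vanish: for every j : Fin m and all f, g : Fin m → Fin 2, α (Function.update f j 0) * α (Function.update g j 1) = α (Function.update f j 1) * α (Function.update g j 0). (That is, the Segre ideal exactly cuts out the completely separable m-qubit states.) -/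
open Finset

/-- An `m`-qubit state `α` is completely separable if and only if all `2 × 2` minors of every
flattening matrix vanish: the Segre ideal exactly cuts out the completely separable states. -/
theorem multi_qubit_separable_iff_segre (m : ℕ) (hm : 1 ≤ m)
    (α : (Fin m → Fin 2) → ℂ) :
    (∃ a : Fin m → Fin 2 → ℂ, ∀ f, α f = ∏ j, a j (f j)) ↔
      (∀ (j : Fin m) (f g : Fin m → Fin 2),
        α (Function.update f j 0) * α (Function.update g j 1) =
          α (Function.update f j 1) * α (Function.update g j 0)) := by
  constructor
  · rintro ⟨a, ha⟩ j f g
    have key : ∀ (h : Fin m → Fin 2) (k : Fin 2),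
        α (Function.update h j k) = a j k * ∏ i ∈ univ.erase j, a i (h i) := by
      intro h k
      rw [ha, ← Finset.mul_prod_erase univ _ (mem_univ j)]
      simp only [Function.update_self]
      congr 1
      refine Finset.prod_congr rfl fun i hi => ?_
      rw [Function.update_of_ne (mem_erase.mp hi).1]
    rw [key, key, key, key]; ring
  · intro hminor
    by_cases h0 : ∀ f, α f = 0
    · refine ⟨fun _ _ => 0, fun f => ?_⟩
      rw [h0 f]
      exact (Finset.prod_eq_zero (mem_univ (⟨0, hm⟩ : Fin m)) rfl).symm
    · push_neg at h0
      obtain ⟨f₀, hf₀⟩ := h0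
      have two_cases : ∀ x : Fin 2, x = 0 ∨ x = 1 := by decide
      have swap : ∀ (j : Fin m) (f : Fin m → Fin 2), f j ≠ f₀ j →
          α f * α f₀ =
            α (Function.update f j (f₀ j)) * α (Function.update f₀ j (f j)) := by
        intro j f hne
        have h := hminor j f f₀
        conv_lhs => rw [← Function.update_eq_self j f, ← Function.update_eq_self j f₀]
        rcases two_cases (f j) with h1 | h1 <;> rcases two_cases (f₀ j) with h2 | h2 <;>
          rw [h1, h2] at hne ⊢ <;>
          first
            | exact absurd rfl hne
            | exact h
            | exact h.symm
      have aux : ∀ s : Finset (Fin m), ∀ f : Fin m → Fin 2, (∀ i, i ∉ s → f i = f₀ i) →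
          α f₀ ^ (m - 1) * α f = ∏ i, α (Function.update f₀ i (f i)) := by
        intro s
        induction s using Finset.induction_on with
        | empty =>
          intro f hf
          have hfe : f = f₀ := funext fun i => hf i (notMem_empty i)
          subst hfe
          simp only [Function.update_eq_self, Finset.prod_const, Finset.card_univ,
            Fintype.card_fun, Fintype.card_fin]
          rw [← pow_succ, Nat.sub_add_cancel hm]
        | @insert j s hj ih =>
          intro f hf
          by_cases hcase : f j = f₀ j
          · refine ih f fun i hi => ?_
            by_cases hij : i = j
            · subst hij; exact hcase
            · exact hf i (by simp [hi, hij])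
          · set f' := Function.update f j (f₀ j) with hf'def
            have hf' : ∀ i, i ∉ s → f' i = f₀ i := by
              intro i hi
              by_cases hij : i = j
              · subst hij; simp [hf'def]
              · rw [hf'def, Function.update_of_ne hij]
                exact hf i (by simp [hi, hij])
            have ih' := ih f' hf'
            have hswap := swap j f hcase
            have hprod' : (∏ i, α (Function.update f₀ i (f' i))) =
                α f₀ * ∏ i ∈ univ.erase j, α (Function.update f₀ i (f i)) := by
              rw [← Finset.mul_prod_erase univ _ (mem_univ j)]
              congr 1
              · rw [hf'def, Function.update_self, Function.update_eq_self]
              · refine Finset.prod_congr rfl fun i hi => ?_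
                rw [hf'def, Function.update_of_ne (mem_erase.mp hi).1]
            have hprodf : (∏ i, α (Function.update f₀ i (f i))) =
                α (Function.update f₀ j (f j)) * ∏ i ∈ univ.erase j,
                  α (Function.update f₀ i (f i)) :=
              (Finset.mul_prod_erase univ _ (mem_univ j)).symm
            apply mul_left_cancel₀ hf₀
            calc α f₀ * (α f₀ ^ (m - 1) * α f)
                = α f₀ ^ (m - 1) * (α f * α f₀) := by ring
              _ = α f₀ ^ (m - 1) * (α f' * α (Function.update f₀ j (f j))) := by
                  rw [hswap]
              _ = (α f₀ ^ (m - 1) * α f') * α (Function.update f₀ j (f j)) := by ring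
              _ = (∏ i, α (Function.update f₀ i (f' i))) *
                    α (Function.update f₀ j (f j)) := by rw [ih']
              _ = (α f₀ * ∏ i ∈ univ.erase j, α (Function.update f₀ i (f i))) *
                    α (Function.update f₀ j (f j)) := by rw [hprod']
              _ = α f₀ * ∏ i, α (Function.update f₀ i (f i)) := by rw [hprodf]; ring
      have key : ∀ f, α f₀ ^ (m - 1) * α f = ∏ i, α (Function.update f₀ i (f i)) :=
        fun f => aux univ f (fun i hi => absurd (mem_univ i) hi)
      set j₀ : Fin m := ⟨0, hm⟩ with hj₀
      refine ⟨Function.update (fun j k => α (Function.update f₀ j k)) j₀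
        (fun k => α (Function.update f₀ j₀ k) / α f₀ ^ (m - 1)), fun f => ?_⟩
      have hpow : α f₀ ^ (m - 1) ≠ 0 := pow_ne_zero _ hf₀
      rw [← Finset.mul_prod_erase univ _ (mem_univ j₀), Function.update_self]
      have herase : (∏ j ∈ univ.erase j₀,
          (Function.update (fun j k => α (Function.update f₀ j k)) j₀
            (fun k => α (Function.update f₀ j₀ k) / α f₀ ^ (m - 1))) j (f j)) =
          ∏ j ∈ univ.erase j₀, α (Function.update f₀ j (f j)) := by
        refine Finset.prod_congr rfl fun i hi => ?_
        rw [Function.update_of_ne (mem_erase.mp hi).1]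
      rw [herase, div_mul_eq_mul_div, Finset.mul_prod_erase univ
        (fun i => α (Function.update f₀ i (f i))) (mem_univ j₀), ← key f]
      field_simp
end

section
/- Let m ≥ 1 and let α : (Fin m → Fin 2) → ℂ be a family of coefficients all lying on the unit circle (Complex.abs (α f) = 1 for all f). Define the comp map on indices by (comp f) j = 1 −entries, i.e. comp f j ≠ f j for all j, and define the multi-qubit quantum gate entangler R : Matrix ((Fin m → Fin 2)) ((Fin m → Fin 2)) ℂ as the sum of a diagonal part and an anti-diagonal part: R f g = α f if f = g and f is a constant function; R f g = α g if f is not constant and g = comp f; and R f g = 0 otherwise. Then R is unitary: R * Rᴴ = 1 and Rᴴ * R = 1. -/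
/-!
The entangler is a generalized permutation matrix: `R f g = α g` exactly when `g = σ f`, where
`σ` fixes the constant bit strings and complements the others. Complementation is an involution
that preserves non-constancy, so `σ` is an involution, and `R = P_σ * diagonal α` is the product
of a permutation matrix and a diagonal matrix with unimodular entries, both unitary.
-/

open Matrix

theorem Fin.eq_of_ne_of_ne_two {a b c : Fin 2} (ha : a ≠ b) (hc : c ≠ b) : a = c := by
  omega

section Complement

variable {ι : Type*} {comp : (ι → Fin 2) → ι → Fin 2}

theorem involutive_of_forall_apply_ne (hcomp : ∀ f j, comp f j ≠ f j) :
    Function.Involutive comp :=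
  fun f => funext fun j => Fin.eq_of_ne_of_ne_two (hcomp (comp f) j) (hcomp f j).symm

theorem exists_forall_eq_of_forall_apply_ne (hcomp : ∀ f j, comp f j ≠ f j)
    {f : ι → Fin 2} (h : ∃ c, ∀ j, comp f j = c) : ∃ c, ∀ j, f j = c := by
  obtain ⟨c, hc⟩ := h
  refine ⟨c + 1, fun j => Fin.eq_of_ne_of_ne_two (b := c) ?_ (by omega)⟩
  exact hc j ▸ (hcomp f j).symm

end Complement

theorem Function.Involutive.ite_id {β : Type*} {τ : β → β} (hτ : Function.Involutive τ)
    {p : β → Prop} [DecidablePred p] (hp : ∀ x, p (τ x) → p x) :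
    Function.Involutive fun x => if p x then x else τ x := by
  intro x
  by_cases hx : p x
  · simp only [if_pos hx]
  · simp only [if_neg hx, if_neg (mt (hp x) hx), hτ x]

theorem RCLike.mem_unitary_of_norm_eq_one {𝕜 : Type*} [RCLike 𝕜] {z : 𝕜} (hz : ‖z‖ = 1) :
    z ∈ unitary 𝕜 := by
  rw [Unitary.mem_iff_self_mul_star, RCLike.star_def, RCLike.mul_conj, hz]
  norm_num

namespace Matrix

variable {n R : Type*} [Fintype n] [DecidableEq n]

theorem permMatrix_mul_diagonal_apply [NonAssocSemiring R] (σ : Equiv.Perm n) (v : n → R)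
    (i j : n) : (σ.permMatrix R * diagonal v) i j = if σ i = j then v j else 0 := by
  simp [mul_diagonal, PEquiv.toMatrix_apply]

variable [CommRing R] [StarRing R]

theorem permMatrix_mem_unitaryGroup (σ : Equiv.Perm n) : σ.permMatrix R ∈ unitaryGroup n R := by
  rw [mem_unitaryGroup_iff, star_eq_conjTranspose, conjTranspose_permMatrix, ← permMatrix_mul,
    inv_mul_cancel, permMatrix_one]

theorem diagonal_mem_unitaryGroup {v : n → R} (hv : ∀ i, v i ∈ unitary R) :
    diagonal v ∈ unitaryGroup n R := by
  rw [mem_unitaryGroup_iff, star_eq_conjTranspose, diagonal_conjTranspose, diagonal_mul_diagonal,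
    ← diagonal_one]
  exact congrArg diagonal (funext fun i => Unitary.mem_iff_self_mul_star.mp (hv i))

end Matrix

theorem multi_qubit_gate_entangler_unitary_general (m : ℕ)
    (α : (Fin m → Fin 2) → ℂ) (hα : ∀ f, ‖α f‖ = 1)
    (comp : (Fin m → Fin 2) → (Fin m → Fin 2))
    (hcomp : ∀ f j, comp f j ≠ f j)
    (R : Matrix (Fin m → Fin 2) (Fin m → Fin 2) ℂ)
    (hR : ∀ f g, R f g =
      if f = g ∧ ∃ c, ∀ j, f j = c then α f
      else if (¬ ∃ c, ∀ j, f j = c) ∧ g = comp f then α g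
      else 0) :
    R * Rᴴ = 1 ∧ Rᴴ * R = 1 := by
  classical
  have hσ : Function.Involutive fun f => if ∃ c, ∀ j, f j = c then f else comp f :=
    (involutive_of_forall_apply_ne hcomp).ite_id fun _ =>
      exists_forall_eq_of_forall_apply_ne hcomp
  have hRσ : R = (hσ.toPerm _).permMatrix ℂ * diagonal α := by
    ext f g
    rw [hR, permMatrix_mul_diagonal_apply, Function.Involutive.coe_toPerm]
    by_cases hf : ∃ c, ∀ j, f j = c
    · by_cases hfg : f = g
      · subst hfg; simp only [hf, and_self, if_true]
      · simp [hf, hfg]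
    · simp only [hf, and_false, if_false, not_false_eq_true, true_and, eq_comm (a := g)]
  have hU : R ∈ unitaryGroup _ ℂ := hRσ ▸ mul_mem (permMatrix_mem_unitaryGroup _)
    (diagonal_mem_unitaryGroup fun f => RCLike.mem_unitary_of_norm_eq_one (hα f))
  exact ⟨mem_unitaryGroup_iff.mp hU, mem_unitaryGroup_iff'.mp hU⟩

/-- The multi-qubit quantum gate entangler `R = R^d + R^{ad}`, with diagonal entries `α f`
at the constant bit strings `f = g` and anti-diagonal entries `α g` at `g = comp f` for
non-constant `f`, is unitary whenever all coefficients `α f` lie on the unit circle. -/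
theorem multi_qubit_gate_entangler_unitary (m : ℕ) (hm : 1 ≤ m)
    (α : (Fin m → Fin 2) → ℂ) (hα : ∀ f, ‖α f‖ = 1)
    (comp : (Fin m → Fin 2) → (Fin m → Fin 2))
    (hcomp : ∀ f j, comp f j ≠ f j)
    (R : Matrix (Fin m → Fin 2) (Fin m → Fin 2) ℂ)
    (hR : ∀ f g, R f g =
      if f = g ∧ ∃ c, ∀ j, f j = c then α f
      else if (¬ ∃ c, ∀ j, f j = c) ∧ g = comp f then α g
      else 0) :
    R * Rᴴ = 1 ∧ Rᴴ * R = 1 :=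
  multi_qubit_gate_entangler_unitary_general m α hα comp hcomp R hR
end
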